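/- arXiv:1107.0264 — 4 statements merged into one kernel-verified Lean document; each statement's English description precedes it below -/
import Mathlib

section
/- Let G be an abelian group, ℤ[G] its integral group ring and I_G ⊆ ℤ[G] the augmentation ideal. Then there is a natural short exact sequence of ℤ[G]-modules 0 → I_G³ → I_G² → Sym²_ℤ(G) → 0, where I_G³ → I_G² is the inclusion, G acts trivially on Sym²_ℤ(G), and the surjection sends (g₁ − 1)(g₂ − 1) to the product g₁·g₂ in the symmetric square of G (G regarded as a ℤ-module). -/
noncomputable section
attribute [local instance] Classical.propDecidable

open scoped TensorProduct

variable (G : Type) [CommGroup G]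

/-- The augmentation ideal `I_G` of the integral group ring `ℤ[G]`. -/
def augIdeal : Ideal (MonoidAlgebra ℤ G) :=
  RingHom.ker ((MonoidAlgebra.lift ℤ ℤ G) 1).toRingHom

theorem gsub_mem (g : G) : MonoidAlgebra.of ℤ G g - 1 ∈ augIdeal G := by
  simp [augIdeal, RingHom.mem_ker, map_sub]

theorem gsubmul_mem (g₁ g₂ : G) :
    (MonoidAlgebra.of ℤ G g₁ - 1) * (MonoidAlgebra.of ℤ G g₂ - 1) ∈ (augIdeal G) ^ 2 := by
  rw [pow_two]
  exact Ideal.mul_mem_mul (gsub_mem G g₁) (gsub_mem G g₂)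

/-- `Sym²_ℤ(G)`: the second symmetric power of `G` as a `ℤ`-module, i.e. the quotient of
`G ⊗_ℤ G` by the subgroup generated by the elements `g₁ ⊗ g₂ - g₂ ⊗ g₁`. -/
def Sym2G : Type :=
  (Additive G ⊗[ℤ] Additive G) ⧸
    (Submodule.span ℤ {z : Additive G ⊗[ℤ] Additive G |
      ∃ x y : Additive G, z = x ⊗ₜ[ℤ] y - y ⊗ₜ[ℤ] x})

instance : AddCommGroup (Sym2G G) :=
  inferInstanceAs (AddCommGroup ((Additive G ⊗[ℤ] Additive G) ⧸
    (Submodule.span ℤ {z : Additive G ⊗[ℤ] Additive G |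
      ∃ x y : Additive G, z = x ⊗ₜ[ℤ] y - y ⊗ₜ[ℤ] x})))

/-!
Let `p : ℤ[G] → G` be the additive map sending `g` to `g`; it kills `I_G²`. After choosing a
well-order on `G`, the basis `G` of `ℤ[G]` carries a quadratic function `θ` with polar form
`(x, y) ↦ p x · p y` that vanishes on the group elements. Hence `θ` is additive on `ker p ⊇ I_G²`,
and an expansion gives `θ((g-1)(h-1)) = -g·h` and `θ((g-1)(h-1)(k-1)) = 0`. Since these products
generate `I_G²` and `I_G³` as abelian groups, `-θ` is a surjection `I_G² → Sym²(G)` killing `I_G³`.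
Conversely `g·h ↦ (g-1)(h-1)` is well defined `Sym²(G) → ℤ[G]/I_G³`, because
`(gg'-1) = (g-1) + (g'-1) + (g-1)(g'-1)`, and composed with `θ` it is `-1` on `I_G²`; so the
kernel is exactly `I_G³`. Equivariance holds because `gx - x = x(g-1) ∈ I_G³`.
-/

open Module MonoidAlgebra Submodule
open scoped Pointwise

lemma Ring.choose_two_add (r s : ℤ) :
    Ring.choose (r + s) 2 = Ring.choose r 2 + Ring.choose s 2 + r * s := by
  rw [Ring.add_choose_eq 2 (Commute.all r s)]
  simp [Finset.Nat.antidiagonal_succ]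
  ring

lemma Ring.choose_one_two : Ring.choose (1 : ℤ) 2 = 0 := by
  simpa using Ring.choose_natCast (R := ℤ) 1 2

section QuadraticRefinement

variable {ι M N : Type*} [AddCommGroup M] [AddCommGroup N]
  (b : Basis ι ℤ M) (B : M →ₗ[ℤ] M →ₗ[ℤ] N)

def diagBilin : M →ₗ[ℤ] M →ₗ[ℤ] N :=
  b.constr ℤ fun i => (b.coord i).smulRight (B (b i) (b i))

def diagQuad (x : M) : N :=
  (b.repr x).sum fun i n => Ring.choose n 2 • B (b i) (b i)

lemma diagBilin_apply (x y : M) :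
    diagBilin b B x y = (b.repr x).sum fun i n => (n * b.repr y i) • B (b i) (b i) := by
  simp [diagBilin, Basis.constr_apply, Finsupp.sum, LinearMap.sum_apply, mul_smul]

lemma diagQuad_add (x y : M) :
    diagQuad b B (x + y) = diagQuad b B x + diagQuad b B y + diagBilin b B x y := by
  set S := (b.repr x).support ∪ (b.repr y).support
  have hx : (b.repr x).support ⊆ S := Finset.subset_union_left
  have hy : (b.repr y).support ⊆ S := Finset.subset_union_right
  have hxy : (b.repr (x + y)).support ⊆ S := by
    rw [map_add]; exact Finsupp.support_add
  rw [diagBilin_apply, diagQuad, diagQuad, diagQuad, Finsupp.sum_of_support_subset _ hxy,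
    Finsupp.sum_of_support_subset _ hx, Finsupp.sum_of_support_subset _ hy,
    Finsupp.sum_of_support_subset _ hx, ← Finset.sum_add_distrib, ← Finset.sum_add_distrib]
  · refine Finset.sum_congr rfl fun i _ => ?_
    rw [map_add, Finsupp.add_apply, Ring.choose_two_add, add_smul, add_smul]
  all_goals simp

variable [LinearOrder ι]

def upperBilin : M →ₗ[ℤ] M →ₗ[ℤ] N :=
  b.constr ℤ fun i => b.constr ℤ fun j => if i < j then B (b i) (b j) else 0

/-- A quadratic function with polar form `B` and vanishing on `b`; the diagonal needs the
non-homogeneous `choose n 2`, since `B (b i) (b i)` need not be divisible by `2`. -/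
def quadRefinement (x : M) : N :=
  upperBilin b B x x + diagQuad b B x

variable {B}

lemma upperBilin_add_flip_add_diagBilin (hB : ∀ x y, B x y = B y x) :
    upperBilin b B + (upperBilin b B).flip + diagBilin b B = B := by
  refine LinearMap.ext_basis b b fun i j => ?_
  simp only [LinearMap.add_apply, LinearMap.flip_apply, upperBilin, diagBilin,
    Basis.constr_basis, LinearMap.smulRight_apply, Basis.coord_apply, Basis.repr_self]
  rcases lt_trichotomy i j with h | rfl | h
  · simp [h, h.ne, h.not_gt]
  · simp
  · simp [h, h.ne', h.not_gt, hB (b i)]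

lemma quadRefinement_add (hB : ∀ x y, B x y = B y x) (x y : M) :
    quadRefinement b B (x + y) = quadRefinement b B x + quadRefinement b B y + B x y := by
  have hpolar := LinearMap.congr_fun₂ (upperBilin_add_flip_add_diagBilin b hB) x y
  simp only [LinearMap.add_apply, LinearMap.flip_apply] at hpolar
  simp only [quadRefinement, diagQuad_add, ← hpolar, map_add, LinearMap.add_apply]
  abel

variable (B)

lemma quadRefinement_basis (i : ι) : quadRefinement b B (b i) = 0 := by
  simp [quadRefinement, upperBilin, diagQuad, Basis.constr_basis, Ring.choose_one_two]

end QuadraticRefinement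

section SymmetricSquare

def symRel : Submodule ℤ (Additive G ⊗[ℤ] Additive G) :=
  span ℤ {z | ∃ x y : Additive G, z = x ⊗ₜ[ℤ] y - y ⊗ₜ[ℤ] x}

instance : Module ℤ (Sym2G G) := inferInstanceAs (Module ℤ (_ ⧸ symRel G))

def symMul : Additive G →ₗ[ℤ] Additive G →ₗ[ℤ] Sym2G G :=
  (TensorProduct.mk ℤ _ _).compr₂ (symRel G).mkQ

variable {G}

lemma symMul_comm (a b : Additive G) : symMul G a b = symMul G b a := by
  have hrel : (symRel G).mkQ (a ⊗ₜ[ℤ] b - b ⊗ₜ[ℤ] a) = 0 :=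
    (Quotient.mk_eq_zero _).mpr (subset_span ⟨a, b, rfl⟩)
  rwa [map_sub, sub_eq_zero] at hrel

@[elab_as_elim]
lemma symMul_induction {P : Sym2G G → Prop} (zero : P 0)
    (mul : ∀ a b, P (symMul G a b)) (add : ∀ s t, P s → P t → P (s + t)) (s : Sym2G G) :
    P s := by
  obtain ⟨z, rfl⟩ := (symRel G).mkQ_surjective s
  induction z using TensorProduct.induction_on with
  | zero => exact zero
  | tmul a b => exact mul a b
  | add z w hz hw => rw [map_add]; exact add _ _ hz hw

end SymmetricSquare

section GroupRing

def additiveSum : MonoidAlgebra ℤ G →ₗ[ℤ] Additive G :=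
  (MonoidAlgebra.basis G ℤ).constr ℤ Additive.ofMul

def augGens : Set (MonoidAlgebra ℤ G) := Set.range fun g => of ℤ G g - 1

variable {G}

lemma additiveSum_of (g : G) : additiveSum G (of ℤ G g) = Additive.ofMul g :=
  (MonoidAlgebra.basis G ℤ).constr_basis ℤ _ g

lemma additiveSum_one : additiveSum G 1 = 0 := by
  rw [← map_one (of ℤ G), additiveSum_of, ofMul_one]

lemma of_mul_sub_one (g h : G) :
    of ℤ G (g * h) - 1 = (of ℤ G g - 1) + (of ℤ G h - 1) + (of ℤ G g - 1) * (of ℤ G h - 1) := by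
  rw [map_mul]; ring

lemma sub_one_mul_sub_one (g h : G) :
    (of ℤ G g - 1) * (of ℤ G h - 1) = (of ℤ G (g * h) + 1) - (of ℤ G g + of ℤ G h) := by
  rw [map_mul]; ring

lemma restrictScalars_augIdeal : (augIdeal G).restrictScalars ℤ = span ℤ (augGens G) := by
  set b := MonoidAlgebra.basis G ℤ
  set ε := (MonoidAlgebra.lift ℤ ℤ G 1).toLinearMap
  have hproj : b.constr ℤ (fun g => of ℤ G g - 1) = LinearMap.id - ε.smulRight 1 :=
    b.ext fun g => by rw [Basis.constr_basis]; simp [b, ε]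
  refine le_antisymm (fun x hx => ?_) (span_le.mpr ?_)
  · have hεx : ε x = 0 := hx
    rw [augGens, ← Basis.constr_range b ℤ]
    exact ⟨x, by rw [hproj]; simp [hεx]⟩
  · rintro _ ⟨g, rfl⟩
    exact gsub_mem G g

lemma toAddSubgroup_augIdeal_sq :
    (augIdeal G ^ 2).toAddSubgroup = AddSubgroup.closure (augGens G * augGens G) := by
  rw [← span_int_eq_addSubgroupClosure, ← span_mul_span, ← restrictScalars_augIdeal, pow_two]
  rfl

lemma toAddSubgroup_augIdeal_cube :
    (augIdeal G ^ 3).toAddSubgroup =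
      AddSubgroup.closure (augGens G * augGens G * augGens G) := by
  rw [← span_int_eq_addSubgroupClosure, ← span_mul_span, ← span_mul_span,
    ← restrictScalars_augIdeal, pow_succ, pow_two]
  rfl

lemma additiveSum_eq_zero_of_mem_sq {x : MonoidAlgebra ℤ G} (hx : x ∈ augIdeal G ^ 2) :
    additiveSum G x = 0 := by
  rw [← mem_toAddSubgroup, toAddSubgroup_augIdeal_sq] at hx
  refine (AddSubgroup.closure_le (additiveSum G).toAddMonoidHom.ker).mpr ?_ hx
  rintro _ ⟨_, ⟨g, rfl⟩, _, ⟨h, rfl⟩, rfl⟩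
  simp only [SetLike.mem_coe, AddMonoidHom.mem_ker, LinearMap.toAddMonoidHom_coe,
    sub_one_mul_sub_one, map_sub, map_add, additiveSum_of, additiveSum_one, ofMul_mul, add_zero,
    sub_self]

lemma sub_one_mul_sub_one_mul_sub_one_mem (g h k : G) :
    (of ℤ G g - 1) * (of ℤ G h - 1) * (of ℤ G k - 1) ∈ augIdeal G ^ 3 := by
  rw [pow_succ]
  exact Ideal.mul_mem_mul (gsubmul_mem G g h) (gsub_mem G k)

end GroupRing

section SymQuad

def symQuad : MonoidAlgebra ℤ G → Sym2G G :=
  letI := IsWellOrder.linearOrder (WellOrderingRel (α := G))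
  quadRefinement (MonoidAlgebra.basis G ℤ)
    ((symMul G).compl₁₂ (additiveSum G) (additiveSum G))

variable {G}

lemma symQuad_add (x y : MonoidAlgebra ℤ G) :
    symQuad G (x + y) =
      symQuad G x + symQuad G y + symMul G (additiveSum G x) (additiveSum G y) :=
  letI := IsWellOrder.linearOrder (WellOrderingRel (α := G))
  quadRefinement_add _ (fun _ _ => symMul_comm _ _) x y

lemma symQuad_of (g : G) : symQuad G (of ℤ G g) = 0 :=
  letI := IsWellOrder.linearOrder (WellOrderingRel (α := G))
  quadRefinement_basis _ _ g

lemma symQuad_add_of_additiveSum_eq_zero {x : MonoidAlgebra ℤ G} (hx : additiveSum G x = 0)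
    (y : MonoidAlgebra ℤ G) : symQuad G (x + y) = symQuad G x + symQuad G y := by
  rw [symQuad_add, hx, map_zero, LinearMap.zero_apply, add_zero]

lemma symQuad_sub_of_additiveSum_eq {x y : MonoidAlgebra ℤ G}
    (h : additiveSum G x = additiveSum G y) : symQuad G (x - y) = symQuad G x - symQuad G y := by
  have hxy := symQuad_add (x - y) y
  rw [sub_add_cancel, map_sub, h, sub_self, map_zero, LinearMap.zero_apply, add_zero] at hxy
  rw [hxy, add_sub_cancel_right]

lemma symQuad_zero : symQuad G 0 = 0 := by
  simpa using symQuad_add (G := G) 0 0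

lemma symQuad_neg {x : MonoidAlgebra ℤ G} (hx : additiveSum G x = 0) :
    symQuad G (-x) = -symQuad G x := by
  rw [← zero_sub, symQuad_sub_of_additiveSum_eq (by rw [map_zero, hx]), symQuad_zero, zero_sub]

lemma symQuad_sub_one_mul_sub_one (g h : G) :
    symQuad G ((of ℤ G g - 1) * (of ℤ G h - 1)) =
      -symMul G (Additive.ofMul g) (Additive.ofMul h) := by
  have hsum : additiveSum G (of ℤ G (g * h) + 1) = additiveSum G (of ℤ G g + of ℤ G h) := by
    rw [map_add, map_add, additiveSum_of, additiveSum_of, additiveSum_of, additiveSum_one,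
      ofMul_mul, add_zero]
  rw [sub_one_mul_sub_one, symQuad_sub_of_additiveSum_eq hsum, symQuad_add, symQuad_add,
    ← map_one (of ℤ G)]
  simp only [symQuad_of, additiveSum_of, ofMul_one, map_zero, add_zero, zero_add, zero_sub]

lemma symQuad_sub_one_mul_sub_one_mul_sub_one (g h k : G) :
    symQuad G ((of ℤ G g - 1) * (of ℤ G h - 1) * (of ℤ G k - 1)) = 0 := by
  have hexpand : (of ℤ G g - 1) * (of ℤ G h - 1) * (of ℤ G k - 1) =
      (of ℤ G (g * k) - 1) * (of ℤ G h - 1) -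
        ((of ℤ G g - 1) * (of ℤ G h - 1) + (of ℤ G k - 1) * (of ℤ G h - 1)) := by
    rw [of_mul_sub_one]; ring
  rw [hexpand, symQuad_sub_of_additiveSum_eq, symQuad_add_of_additiveSum_eq_zero,
    symQuad_sub_one_mul_sub_one, symQuad_sub_one_mul_sub_one, symQuad_sub_one_mul_sub_one,
    ofMul_mul, map_add, LinearMap.add_apply]
  · abel
  · exact additiveSum_eq_zero_of_mem_sq (gsubmul_mem G g h)
  · rw [additiveSum_eq_zero_of_mem_sq (gsubmul_mem G _ _),
      additiveSum_eq_zero_of_mem_sq (add_mem (gsubmul_mem G _ _) (gsubmul_mem G _ _))]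

lemma symQuad_eqOn_closure {M : Type*} [AddCommGroup M] (φ : Sym2G G →+ M)
    (ψ : MonoidAlgebra ℤ G →+ M) {S : Set (MonoidAlgebra ℤ G)}
    (hS : ∀ s ∈ S, additiveSum G s = 0) (h : ∀ s ∈ S, φ (symQuad G s) = ψ s)
    {x : MonoidAlgebra ℤ G} (hx : x ∈ AddSubgroup.closure S) : φ (symQuad G x) = ψ x := by
  have hker : AddSubgroup.closure S ≤ (additiveSum G).toAddMonoidHom.ker :=
    (AddSubgroup.closure_le _).mpr hS
  induction hx using AddSubgroup.closure_induction with
  | mem s hs => exact h s hs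
  | zero => rw [symQuad_zero, map_zero, map_zero]
  | add x y hx _ ihx ihy =>
    rw [symQuad_add_of_additiveSum_eq_zero (hker hx), map_add, map_add, ihx, ihy]
  | neg x hx ih =>
    rw [symQuad_neg (hker hx), map_neg, map_neg, ih]

lemma symQuad_eq_zero_of_mem_cube {x : MonoidAlgebra ℤ G} (hx : x ∈ augIdeal G ^ 3) :
    symQuad G x = 0 := by
  rw [← mem_toAddSubgroup, toAddSubgroup_augIdeal_cube] at hx
  refine symQuad_eqOn_closure (AddMonoidHom.id _) 0 ?_ ?_ hx <;>
    rintro _ ⟨_, ⟨_, ⟨g, rfl⟩, _, ⟨h, rfl⟩, rfl⟩, _, ⟨k, rfl⟩, rfl⟩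
  · exact additiveSum_eq_zero_of_mem_sq
      (Ideal.pow_le_pow_right (by norm_num) (sub_one_mul_sub_one_mul_sub_one_mem g h k))
  · exact symQuad_sub_one_mul_sub_one_mul_sub_one g h k

lemma symQuad_of_mul {x : MonoidAlgebra ℤ G} (hx : x ∈ augIdeal G ^ 2) (g : G) :
    symQuad G (of ℤ G g * x) = symQuad G x := by
  have hcube : of ℤ G g * x - x ∈ augIdeal G ^ 3 := by
    rw [show of ℤ G g * x - x = x * (of ℤ G g - 1) by ring, pow_succ]
    exact Ideal.mul_mem_mul hx (gsub_mem G g)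
  rw [← sub_add_cancel (of ℤ G g * x) x, symQuad_add_of_additiveSum_eq_zero
    (additiveSum_eq_zero_of_mem_sq (Ideal.pow_le_pow_right (by norm_num) hcube)),
    symQuad_eq_zero_of_mem_cube hcube, zero_add]

end SymQuad

section CubeQuotient

local notation "mk₃" => Ideal.Quotient.mk (augIdeal G ^ 3)

variable {G}

lemma mk_of_mul_sub_one_mul_sub_one (g g' h : G) :
    mk₃ ((of ℤ G (g * g') - 1) * (of ℤ G h - 1)) =
      mk₃ ((of ℤ G g - 1) * (of ℤ G h - 1)) + mk₃ ((of ℤ G g' - 1) * (of ℤ G h - 1)) := by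
  rw [of_mul_sub_one, add_mul, add_mul, map_add, map_add,
    Ideal.Quotient.eq_zero_iff_mem.mpr (sub_one_mul_sub_one_mul_sub_one_mem g g' h), add_zero]

variable (G) in
def subOneMulSubOne : Additive G →+ Additive G →+ MonoidAlgebra ℤ G ⧸ augIdeal G ^ 3 :=
  AddMonoidHom.mk'
    (fun a => AddMonoidHom.mk' (fun b => mk₃ ((of ℤ G a.toMul - 1) * (of ℤ G b.toMul - 1)))
      fun b b' => by
        simp only [mul_comm (of ℤ G a.toMul - 1)]
        exact mk_of_mul_sub_one_mul_sub_one _ _ _)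
    fun a a' => AddMonoidHom.ext fun b => mk_of_mul_sub_one_mul_sub_one _ _ _

variable (G) in
def sym2ToQuot : Sym2G G →ₗ[ℤ] MonoidAlgebra ℤ G ⧸ augIdeal G ^ 3 :=
  (symRel G).liftQ (TensorProduct.lift (LinearMap.mk₂ ℤ (fun a b => subOneMulSubOne G a b)
    (fun a a' b => by rw [map_add, AddMonoidHom.add_apply])
    (fun n a b => by rw [map_zsmul, AddMonoidHom.zsmul_apply])
    (fun a b b' => map_add _ b b')
    (fun n a b => map_zsmul _ n b)))
    (span_le.mpr <| by
      rintro _ ⟨a, b, rfl⟩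
      exact LinearMap.mem_ker.mpr <| (map_sub _ _ _).trans <|
        sub_eq_zero.mpr <| congrArg mk₃ (mul_comm _ _))

lemma sym2ToQuot_symMul (a b : Additive G) :
    sym2ToQuot G (symMul G a b) = mk₃ ((of ℤ G a.toMul - 1) * (of ℤ G b.toMul - 1)) := rfl

lemma sym2ToQuot_symQuad {x : MonoidAlgebra ℤ G} (hx : x ∈ augIdeal G ^ 2) :
    sym2ToQuot G (symQuad G x) = -mk₃ x := by
  rw [← mem_toAddSubgroup, toAddSubgroup_augIdeal_sq] at hx
  refine symQuad_eqOn_closure (sym2ToQuot G).toAddMonoidHom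
    (-(mk₃ : MonoidAlgebra ℤ G →+* _).toAddMonoidHom) ?_ ?_ hx <;>
    rintro _ ⟨_, ⟨g, rfl⟩, _, ⟨h, rfl⟩, rfl⟩
  · exact additiveSum_eq_zero_of_mem_sq (gsubmul_mem G g h)
  · simp only [LinearMap.toAddMonoidHom_coe, symQuad_sub_one_mul_sub_one, map_neg,
      sym2ToQuot_symMul, AddMonoidHom.neg_apply, RingHom.toAddMonoidHom_eq_coe,
      AddMonoidHom.coe_coe]
    rfl

lemma symQuad_eq_zero_iff {x : MonoidAlgebra ℤ G} (hx : x ∈ augIdeal G ^ 2) :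
    symQuad G x = 0 ↔ x ∈ augIdeal G ^ 3 := by
  refine ⟨fun h => ?_, symQuad_eq_zero_of_mem_cube⟩
  rw [← Ideal.Quotient.eq_zero_iff_mem, ← neg_eq_zero, ← sym2ToQuot_symQuad hx, h, map_zero]

end CubeQuotient

/-- For an abelian group `G`, there is a natural short exact sequence of
`ℤ[G]`-modules `0 → I_G³ → I_G² → Sym²_ℤ(G) → 0`, where the first map is the inclusion, `G`
acts trivially on `Sym²_ℤ(G)`, and the surjection sends `(g₁-1)(g₂-1)` to the product
`g₁·g₂` in the symmetric square.  (The surjection `π` is additive, `G`-equivariant for the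
trivial action on the target, has kernel exactly `I_G³`, and takes the stated values on the
products `(g₁-1)(g₂-1)`.) -/
theorem aug_ideal_sym2_ses (G : Type) [CommGroup G] :
    ∃ π : ↥((augIdeal G) ^ 2) →+ Sym2G G,
      Function.Surjective π ∧
      (∀ x : ↥((augIdeal G) ^ 2), π x = 0 ↔ (x : MonoidAlgebra ℤ G) ∈ (augIdeal G) ^ 3) ∧
      (∀ (g : G) (x : ↥((augIdeal G) ^ 2)),
        π ⟨MonoidAlgebra.of ℤ G g * (x : MonoidAlgebra ℤ G),
          Ideal.mul_mem_left _ _ x.2⟩ = π x) ∧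
      (∀ g₁ g₂ : G,
        π ⟨(MonoidAlgebra.of ℤ G g₁ - 1) * (MonoidAlgebra.of ℤ G g₂ - 1),
            gsubmul_mem G g₁ g₂⟩ =
          Submodule.Quotient.mk (Additive.ofMul g₁ ⊗ₜ[ℤ] Additive.ofMul g₂)) := by
  let π : ↥(augIdeal G ^ 2) →+ Sym2G G := AddMonoidHom.mk' (fun x => -symQuad G x) fun x y => by
    rw [Submodule.coe_add, symQuad_add_of_additiveSum_eq_zero (additiveSum_eq_zero_of_mem_sq x.2),
      neg_add]
  have hπ (g₁ g₂ : G) : π ⟨_, gsubmul_mem G g₁ g₂⟩ = symMul G (.ofMul g₁) (.ofMul g₂) := by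
    change -symQuad G _ = _
    rw [symQuad_sub_one_mul_sub_one, neg_neg]
  refine ⟨π, fun s => ?_, fun x => neg_eq_zero.trans (symQuad_eq_zero_iff x.2),
    fun g x => congrArg Neg.neg (symQuad_of_mul x.2 g), hπ⟩
  induction s using symMul_induction with
  | zero => exact ⟨0, map_zero π⟩
  | mul a b => exact ⟨_, hπ a.toMul b.toMul⟩
  | add s t hs ht =>
    obtain ⟨x, rfl⟩ := hs
    obtain ⟨y, rfl⟩ := ht
    exact ⟨x + y, map_add π x y⟩
end
end

section
/- Let P be a set and, for n ≥ 1, let C_n be the free abelian group on the set of ordered n-tuples of distinct elements of P, with C₀ = ℤ; let d_n : C_n → C_{n−1} be given by d_n(x₁,…,x_n) = Σ_{i=1}^n (−1)^{i+1}(x₁,…,x̂ᵢ,…,x_n) for n ≥ 2 and d₁(x) = 1. Then the resulting chain complex C_• has H_n(C_•) = 0 for every n different from the cardinality of P; in particular, if P is infinite then C_• is acyclic (H_n(C_•) = 0 for all n ≥ 1 and H₀(C_•) ≅ ℤ via the identity). -/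
noncomputable section
attribute [local instance] Classical.propDecidable

open scoped TensorProduct

variable (P : Type)

/-- Ordered `n`-tuples of distinct points of `P`. -/
def DTup (n : ℕ) : Type := {f : Fin n → P // Function.Injective f}

/-- `C_n`: the free abelian group on ordered `n`-tuples of distinct points of `P`
(`C_0` is the free abelian group on the single empty tuple, i.e. a copy of `ℤ`). -/
def CC (n : ℕ) : Type := DTup P n →₀ ℤ

instance (n : ℕ) : AddCommGroup (CC P n) := inferInstanceAs (AddCommGroup (DTup P n →₀ ℤ))

/-- Deletion of the `i`-th entry of a tuple of distinct points. -/
def faceD (n : ℕ) (i : Fin (n + 1)) (t : DTup P (n + 1)) : DTup P n :=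
  ⟨t.1 ∘ Fin.succAbove i, t.2.comp (Fin.succAbove_right_injective)⟩

/-- The simplicial boundary map `d : C_{n+1} → C_n`,
`d(x₁,…,x_{n+1}) = Σ_{i} (-1)^{i+1} (x₁,…,x̂ᵢ,…,x_{n+1})`;  for `n = 0` it is the
augmentation `d₁(x) = 1` (under the identification `C₀ ≅ ℤ`). -/
def dd (n : ℕ) : CC P (n + 1) →ₗ[ℤ] CC P n :=
  Finsupp.lsum ℤ fun t =>
    ∑ i : Fin (n + 1), ((-1 : ℤ) ^ (i : ℕ)) • Finsupp.lsingle (faceD P n i t)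

/-!
Prepending a point `q` to the tuples avoiding it, and killing the others, gives a map `s_q`
(`cone q`) with `d s_q + s_q d = id` on a tuple avoiding `q`, while on a tuple `t` with `t j = q`
it gives `±(q, t without its j-th entry)`, a tuple with the same set of entries as `t`. Hence if all
tuples occurring in a cycle `x` contain a set `S` of points, all tuples occurring in the homologous
cycle `x - d (s_q x)` contain `S ∪ {q}`. Doing this for `n + 2` distinct points kills an
`(n + 1)`-cycle, since no `(n + 1)`-tuple has `n + 2` distinct entries. If `|P| ≤ n` there are no
`(n + 1)`-tuples at all, and in degree `0` any point gives a preimage.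
-/

theorem finite_and_natCard_lt_of_forall_finset_card_ne {α : Type*} {k : ℕ}
    (h : ∀ S : Finset α, S.card ≠ k) : Finite α ∧ Nat.card α < k := by
  have hfin : Finite α := by
    by_contra hα
    rw [not_finite_iff_infinite] at hα
    obtain ⟨S, hS⟩ := Infinite.exists_subset_card_eq α k
    exact h S hS
  refine ⟨hfin, not_le.mp fun hk => ?_⟩
  have := Fintype.ofFinite α
  obtain ⟨S, -, hS⟩ := Finset.exists_subset_card_eq (s := (Finset.univ : Finset α)) (n := k)
    (by rwa [Finset.card_univ, ← Nat.card_eq_fintype_card])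
  exact h S hS

variable {P} {q : P} {k : ℕ}

def CC.of (t : DTup P k) : CC P k := Finsupp.single t 1

theorem CC.hom_ext {M : Type*} [AddCommGroup M] {f g : CC P k →ₗ[ℤ] M}
    (h : ∀ t, f (CC.of t) = g (CC.of t)) : f = g :=
  Finsupp.lhom_ext' fun t => LinearMap.ext_ring (h t)

theorem CC.span_range_of : Submodule.span ℤ (Set.range (CC.of : DTup P k → CC P k)) = ⊤ :=
  Finsupp.basisSingleOne.span_eq

theorem dd_of {n : ℕ} (t : DTup P (n + 1)) :
    dd P n (CC.of t) = ∑ i : Fin (n + 1), (-1 : ℤ) ^ (i : ℕ) • CC.of (faceD P n i t) :=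
  (Finsupp.lsum_single _ _ _ _).trans (by simp only [LinearMap.sum_apply]; rfl)

theorem faceD_faceD {n : ℕ} (i : Fin (n + 2)) (j : Fin (n + 1)) (t : DTup P (n + 2)) :
    faceD P n j (faceD P (n + 1) i t) =
      faceD P n (j.predAbove i) (faceD P (n + 1) (i.succAbove j) t) :=
  Subtype.ext (Fin.removeNth_removeNth_eq_swap t.1 j i)

theorem dd_comp_dd (n : ℕ) : (dd P n).comp (dd P (n + 1)) = 0 := by
  refine CC.hom_ext fun t => ?_
  simp only [LinearMap.comp_apply, dd_of, map_sum, map_zsmul, Finset.smul_sum, smul_smul,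
    ← Finset.sum_product', Finset.univ_product_univ, LinearMap.zero_apply]
  -- `(i, j) ↦ (i.succAbove j, j.predAbove i)` deletes the same two entries in the other order,
  -- with the opposite sign.
  refine Finset.sum_ninvolution (fun p => (p.1.succAbove p.2, p.2.predAbove p.1)) (fun p => ?_)
    (fun p _ => ?_) (fun _ => Finset.mem_univ _) (fun p => ?_)
  · rw [faceD_faceD, ← add_smul, ← pow_add, ← pow_add, Fin.neg_one_pow_succAbove_add_predAbove,
      add_neg_cancel, zero_smul]
  · exact fun h => Fin.succAbove_ne p.1 p.2 (congrArg Prod.fst h)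
  · rw [Fin.succAbove_succAbove_predAbove, Fin.predAbove_predAbove_succAbove]

theorem dd_comp_dd_apply {n : ℕ} (x : CC P (n + 2)) : dd P n (dd P (n + 1) x) = 0 :=
  LinearMap.congr_fun (dd_comp_dd n) x

def DTup.cons (q : P) (t : DTup P k) (h : q ∉ Set.range t.1) : DTup P (k + 1) :=
  ⟨Fin.cons q t.1, Fin.cons_injective_of_injective h t.2⟩

def cone (q : P) (k : ℕ) : CC P k →ₗ[ℤ] CC P (k + 1) :=
  Finsupp.linearCombination ℤ fun t => if h : q ∈ Set.range t.1 then 0 else CC.of (t.cons q h)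

theorem cone_of_mem {t : DTup P k} (h : q ∈ Set.range t.1) : cone q k (CC.of t) = 0 :=
  (Finsupp.linearCombination_single _ _ _).trans (by rw [dif_pos h, smul_zero])

theorem cone_of_notMem {t : DTup P k} (h : q ∉ Set.range t.1) :
    cone q k (CC.of t) = CC.of (t.cons q h) :=
  (Finsupp.linearCombination_single _ _ _).trans (by rw [dif_neg h, one_smul])

theorem range_faceD_subset (i : Fin (k + 1)) (t : DTup P (k + 1)) :
    Set.range (faceD P k i t).1 ⊆ Set.range t.1 :=
  Set.range_comp_subset_range (Fin.succAbove i) t.1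

theorem faceD_zero_cons (t : DTup P k) (h : q ∉ Set.range t.1) :
    faceD P k 0 (t.cons q h) = t :=
  Subtype.ext (funext fun l => by simp [faceD, DTup.cons])

theorem faceD_succ_cons (i : Fin (k + 1)) (t : DTup P (k + 1)) (h : q ∉ Set.range t.1) :
    faceD P (k + 1) i.succ (t.cons q h) =
      (faceD P k i t).cons q (fun hq => h (range_faceD_subset i t hq)) :=
  Subtype.ext (Fin.cons_comp_succ_succAbove q t.1 i)

theorem dd_cone_add_cone_dd_of_notMem (t : DTup P (k + 1)) (h : q ∉ Set.range t.1) :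
    dd P (k + 1) (cone q (k + 1) (CC.of t)) + cone q k (dd P k (CC.of t)) = CC.of t := by
  have hface i : q ∉ Set.range (faceD P k i t).1 := fun hq => h (range_faceD_subset i t hq)
  rw [cone_of_notMem h, dd_of, Fin.sum_univ_succ, faceD_zero_cons, dd_of, map_sum]
  simp only [Fin.val_zero, pow_zero, one_smul, Fin.val_succ, pow_succ, mul_neg_one, neg_smul,
    faceD_succ_cons, map_zsmul, fun i => cone_of_notMem (hface i), Finset.sum_neg_distrib]
  abel

theorem notMem_range_faceD {j : Fin (k + 1)} {t : DTup P (k + 1)} (hj : t.1 j = q) :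
    q ∉ Set.range (faceD P k j t).1 := by
  rintro ⟨l, hl⟩
  exact Fin.succAbove_ne j l (t.2 (hl.trans hj.symm))

theorem dd_cone_add_cone_dd_of_eq (t : DTup P (k + 1)) (j : Fin (k + 1)) (hj : t.1 j = q) :
    dd P (k + 1) (cone q (k + 1) (CC.of t)) + cone q k (dd P k (CC.of t)) =
      (-1 : ℤ) ^ (j : ℕ) • CC.of ((faceD P k j t).cons q (notMem_range_faceD hj)) := by
  rw [cone_of_mem ⟨j, hj⟩, map_zero, zero_add, dd_of, map_sum, Finset.sum_eq_single j]
  · rw [map_zsmul, cone_of_notMem]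
  · intro i _ hij
    obtain ⟨l, hl⟩ := Fin.exists_succAbove_eq hij.symm
    rw [map_zsmul, cone_of_mem ⟨l, by rw [← hj, ← hl]; rfl⟩, smul_zero]
  · exact fun h => absurd (Finset.mem_univ j) h

theorem range_cons_faceD {j : Fin (k + 1)} {t : DTup P (k + 1)} (hj : t.1 j = q) :
    Set.range ((faceD P k j t).cons q (notMem_range_faceD hj)).1 = Set.range t.1 := by
  rw [DTup.cons, Fin.range_cons, faceD, Set.range_comp, Fin.range_succAbove, ← hj,
    ← Set.image_insert_eq, Set.insert_eq, Set.union_compl_self, Set.image_univ]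

variable (P) in
def spanTuplesContaining (S : Set P) (k : ℕ) : Submodule ℤ (CC P k) :=
  Submodule.span ℤ (CC.of '' {t : DTup P k | S ⊆ Set.range t.1})

theorem spanTuplesContaining_empty : spanTuplesContaining P ∅ k = ⊤ := by
  simp only [spanTuplesContaining, Set.empty_subset, Set.ofPred_true, Set.image_univ,
    CC.span_range_of]

theorem spanTuplesContaining_eq_bot {S : Finset P} (hS : k < S.card) :
    spanTuplesContaining P S k = ⊥ := by
  rw [spanTuplesContaining, Submodule.span_eq_bot]
  rintro _ ⟨t, ht, -⟩
  have := Finset.card_le_card_of_surjOn t.1 (s := Finset.univ) (by simpa [Set.SurjOn] using ht)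
  rw [Finset.card_univ, Fintype.card_fin] at this
  omega

theorem sub_dd_cone_mem_spanTuplesContaining {S : Set P} {x : CC P (k + 1)}
    (hx : dd P k x = 0) (hxS : x ∈ spanTuplesContaining P S (k + 1)) :
    x - dd P (k + 1) (cone q (k + 1) x) ∈ spanTuplesContaining P (insert q S) (k + 1) := by
  set f := LinearMap.id - ((dd P (k + 1)).comp (cone q (k + 1)) + (cone q k).comp (dd P k))
  have hf : x - dd P (k + 1) (cone q (k + 1) x) = f x := by simp [f, hx]
  suffices spanTuplesContaining P S (k + 1) ≤
      (spanTuplesContaining P (insert q S) (k + 1)).comap f from hf ▸ this hxS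
  refine Submodule.span_le.mpr ?_
  rintro _ ⟨t, ht, rfl⟩
  rw [SetLike.mem_coe, Submodule.mem_comap]
  simp only [f, LinearMap.sub_apply, LinearMap.add_apply, LinearMap.id_apply, LinearMap.comp_apply]
  have hof {u : DTup P (k + 1)} (hu : insert q S ⊆ Set.range u.1) :
      CC.of u ∈ spanTuplesContaining P (insert q S) (k + 1) :=
    Submodule.subset_span ⟨u, hu, rfl⟩
  by_cases hq : q ∈ Set.range t.1
  · obtain ⟨j, hj⟩ := hq
    have hins : insert q S ⊆ Set.range t.1 := Set.insert_subset ⟨j, hj⟩ ht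
    rw [dd_cone_add_cone_dd_of_eq t j hj]
    exact sub_mem (hof hins) (Submodule.smul_mem _ _ (hof (range_cons_faceD hj ▸ hins)))
  · rw [dd_cone_add_cone_dd_of_notMem t hq, sub_self]
    exact zero_mem _

theorem exists_sub_dd_mem_spanTuplesContaining {n : ℕ} {x : CC P (n + 1)} (hx : dd P n x = 0)
    (S : Finset P) : ∃ y, x - dd P (n + 1) y ∈ spanTuplesContaining P S (n + 1) := by
  induction S using Finset.induction_on with
  | empty => exact ⟨0, by simp [spanTuplesContaining_empty]⟩
  | insert q S _ ih =>
    obtain ⟨y, hy⟩ := ih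
    have hcycle : dd P n (x - dd P (n + 1) y) = 0 := by rw [map_sub, hx, dd_comp_dd_apply, sub_zero]
    refine ⟨y + cone q (n + 1) (x - dd P (n + 1) y), ?_⟩
    rw [map_add, ← sub_sub, Finset.coe_insert]
    exact sub_dd_cone_mem_spanTuplesContaining hcycle hy

theorem exists_dd_eq_of_lt_card (S : Finset P) {n : ℕ} (hS : n + 1 < S.card)
    {x : CC P (n + 1)} (hx : dd P n x = 0) : ∃ y, dd P (n + 1) y = x := by
  obtain ⟨y, hy⟩ := exists_sub_dd_mem_spanTuplesContaining hx S
  rw [spanTuplesContaining_eq_bot hS, Submodule.mem_bot, sub_eq_zero] at hy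
  exact ⟨y, hy.symm⟩

instance : Unique (DTup P 0) where
  default := ⟨Fin.elim0, fun i => i.elim0⟩
  uniq _ := Subtype.ext (funext fun i => i.elim0)

theorem dd_zero_surjective [Nonempty P] : Function.Surjective (dd P 0) := by
  intro x
  have hx : x ∈ Submodule.span ℤ {CC.of (default : DTup P 0)} := by
    rw [← Set.range_unique, CC.span_range_of]
    exact Submodule.mem_top
  obtain ⟨c, rfl⟩ := Submodule.mem_span_singleton.mp hx
  let p : DTup P 1 := ⟨fun _ => Classical.arbitrary P, Function.injective_of_subsingleton _⟩
  refine ⟨c • CC.of p, ?_⟩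
  rw [map_zsmul, dd_of, Fin.sum_univ_one, Fin.val_zero, pow_zero, one_smul,
    Subsingleton.elim (faceD P 0 0 p) default]

theorem isEmpty_dTup_of_natCard_lt [Finite P] (h : Nat.card P < k) : IsEmpty (DTup P k) :=
  ⟨fun t => (Nat.card_le_card_of_injective t.1 t.2).not_gt (by rwa [Nat.card_fin])⟩

instance [IsEmpty (DTup P k)] : Subsingleton (CC P k) :=
  inferInstanceAs (Subsingleton (DTup P k →₀ ℤ))

/-- The (augmented) complex `⋯ → C_n → C_{n-1} → ⋯ → C₁ → C₀ ≅ ℤ` of free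
abelian groups on tuples of distinct points of `P` is exact in every degree different from
the cardinality of `P`; in particular it is acyclic when `P` is infinite. -/
theorem distinct_tuples_complex_acyclic (P : Type) :
    ((Finite P → Nat.card P ≠ 0) → Function.Surjective (dd P 0)) ∧
    (∀ n : ℕ, (Finite P → (n + 1 : ℕ) ≠ Nat.card P) →
      ∀ x : CC P (n + 1), dd P n x = 0 → ∃ y : CC P (n + 2), dd P (n + 1) y = x) := by
  refine ⟨fun hP => ?_, fun n hn x hx => ?_⟩
  · have : Nonempty P := by
      by_contra h
      rw [not_nonempty_iff] at h
      exact hP inferInstance Nat.card_of_isEmpty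
    exact dd_zero_surjective
  · by_cases hS : ∃ S : Finset P, S.card = n + 2
    · obtain ⟨S, hS⟩ := hS
      exact exists_dd_eq_of_lt_card S (by omega) hx
    · push Not at hS
      obtain ⟨hfin, hcard⟩ := finite_and_natCard_lt_of_forall_finset_card_ne hS
      have := isEmpty_dTup_of_natCard_lt (P := P) (k := n + 1) (by have := hn hfin; omega)
      exact ⟨0, Subsingleton.elim _ _⟩
end
end

section
/- Let q = p^f be a prime power and let m, n ≥ 1 satisfy (p − 1)f > mn. Then there exists a ∈ 𝔽_q^× such that for every n-tuple (φ₁, …, φ_n) of (not necessarily distinct) elements of the Galois group Gal(𝔽_q/𝔽_p), one has ∏_{i=1}^{n} φᵢ(a^m) ≠ 1. -/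
/-!
Take `a` a generator of `𝔽_q^×`. Every `φ ∈ Gal(𝔽_q/𝔽_p)` is `x ↦ x ^ p ^ k` with `k < f`, so
`∏ φᵢ(a ^ m) = a ^ N` where `N` is a sum of `mn` powers `p ^ k` with `k < f`. Such a sum is never a
positive multiple of `q - 1` when `mn < (p - 1) f`: trading `p` copies of `p ^ k` for one
`p ^ (k + 1)` (and `p ^ f` for `p ^ 0`, as `p ^ f ≡ 1`) removes terms without changing `N` modulo
`q - 1`, and once every power occurs at most `p - 1` times, having fewer than `(p - 1) f` terms
forces `0 < N < p ^ f - 1`.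
-/

open Multiset

theorem FiniteField.exists_lt_finrank_algEquiv_apply_eq_pow {K L : Type*} [Field K] [Fintype K]
    [Field L] [Finite L] [Algebra K L] (φ : L ≃ₐ[K] L) :
    ∃ k < Module.finrank K L, ∀ x, φ x = x ^ Fintype.card K ^ k := by
  obtain ⟨k, rfl⟩ := (FiniteField.bijective_frobeniusAlgEquivOfAlgebraic_pow K L).2 φ
  refine ⟨k, k.2, fun x => ?_⟩
  rw [AlgEquiv.coe_pow, FiniteField.coe_frobeniusAlgEquivOfAlgebraic_iterate]

namespace Nat

theorem pow_mod_modEq_pow {p : ℕ} (hp : 0 < p) (f a : ℕ) :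
    p ^ (a % f) ≡ p ^ a [MOD p ^ f - 1] := by
  have hpf : p ^ f ≡ 1 [MOD p ^ f - 1] := Nat.modEq_sub (Nat.one_le_pow _ _ hp)
  calc p ^ (a % f) = 1 ^ (a / f) * p ^ (a % f) := by rw [one_pow, one_mul]
    _ ≡ (p ^ f) ^ (a / f) * p ^ (a % f) [MOD p ^ f - 1] := (hpf.symm.pow _).mul_right _
    _ = p ^ a := by rw [← pow_mul, ← pow_add, Nat.div_add_mod]

variable {p f : ℕ}

theorem sum_map_pow_lt_of_lt (hp : 0 < p) {s t : Multiset ℕ} (h : s < t) :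
    (s.map (p ^ ·)).sum < (t.map (p ^ ·)).sum := by
  obtain ⟨a, ha⟩ := lt_iff_cons_le.1 h
  obtain ⟨u, rfl⟩ := exists_add_of_le ha
  simp only [map_add, map_cons, sum_add, sum_cons]
  have : 0 < p ^ a := Nat.pow_pos hp
  omega

theorem sum_map_pow_nsmul_range (hp : 0 < p) (f : ℕ) :
    (((p - 1) • range f).map (p ^ ·)).sum = p ^ f - 1 := by
  have hgeom := geom_sum_mul_add (p - 1) f
  rw [Nat.sub_one_add_one hp.ne', Finset.sum_eq_multiset_sum, Finset.range_val] at hgeom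
  rw [Multiset.map_nsmul, sum_nsmul, smul_eq_mul, mul_comm]
  exact Nat.eq_sub_of_add_eq hgeom

theorem exists_carry (hp : 0 < p) {s : Multiset ℕ} (hs : ∀ k ∈ s, k < f) {j : ℕ}
    (hj : p ≤ s.count j) :
    ∃ t : Multiset ℕ, card t + (p - 1) = card s ∧ (∀ k ∈ t, k < f) ∧ t ≠ 0 ∧
      (t.map (p ^ ·)).sum ≡ (s.map (p ^ ·)).sum [MOD p ^ f - 1] := by
  have hjf : j < f := hs j (count_pos.1 (by omega))
  obtain ⟨u, rfl⟩ := exists_add_of_le (le_count_iff_replicate_le.1 hj)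
  refine ⟨(j + 1) % f ::ₘ u, ?_, ?_, cons_ne_zero, ?_⟩
  · simp only [card_cons, card_add, card_replicate]
    omega
  · simp only [mem_cons]
    rintro k (rfl | hk)
    · exact Nat.mod_lt _ (by omega)
    · exact hs k (mem_add.2 (Or.inr hk))
  · simp only [map_cons, sum_cons, map_add, sum_add, map_replicate, sum_replicate, smul_eq_mul,
      ← pow_succ']
    exact (pow_mod_modEq_pow hp f (j + 1)).add_right _

theorem sum_map_pow_lt_pow_sub_one (hp : 0 < p) {s : Multiset ℕ} (hs : ∀ k ∈ s, k < f)
    (hcount : ∀ j, s.count j < p) (hcard : card s < (p - 1) * f) :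
    (s.map (p ^ ·)).sum < p ^ f - 1 := by
  have hle : s ≤ (p - 1) • range f := le_iff_count.2 fun k => by
    by_cases hk : k ∈ s
    · rw [count_nsmul, count_eq_one_of_mem (nodup_range f) (mem_range.2 (hs k hk))]
      have := hcount k
      omega
    · simp [count_eq_zero_of_notMem hk]
  have hne : s ≠ (p - 1) • range f := fun h => by
    rw [h, card_nsmul, card_range] at hcard
    omega
  rw [← sum_map_pow_nsmul_range hp f]
  exact sum_map_pow_lt_of_lt hp (lt_of_le_of_ne hle hne)

theorem sub_one_mul_le_card_of_dvd_sum_map_pow (hp : 2 ≤ p) {s : Multiset ℕ}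
    (hs : ∀ k ∈ s, k < f) (hs0 : s ≠ 0) (hdvd : p ^ f - 1 ∣ (s.map (p ^ ·)).sum) :
    (p - 1) * f ≤ card s := by
  induction hn : card s using Nat.strong_induction_on generalizing s with
  | _ n ih =>
  by_cases hcarry : ∃ j, p ≤ s.count j
  · obtain ⟨j, hj⟩ := hcarry
    obtain ⟨t, hcard, ht, ht0, hmod⟩ := exists_carry (by omega) hs hj
    have := ih (card t) (by omega) ht ht0 ((hmod.dvd_iff dvd_rfl).2 hdvd) rfl
    omega
  · push Not at hcarry
    by_contra! hlt
    have hpos : 0 < (s.map (p ^ ·)).sum := by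
      simpa using sum_map_pow_lt_of_lt (p := p) (by omega) (bot_lt_iff_ne_bot.2 hs0)
    exact (Nat.le_of_dvd hpos hdvd).not_gt
      (sum_map_pow_lt_pow_sub_one (by omega) hs hcarry (hn ▸ hlt))

end Nat

/-- Let `q = p^f` and `m, n ≥ 1` with `(p-1)f > mn`.  Then there exists
`a ∈ 𝔽_q^×` such that for every `n`-tuple `φ₁, …, φ_n` of elements of `Gal(𝔽_q/𝔽_p)` one has
`∏ᵢ φᵢ(a^m) ≠ 1`. -/
theorem exists_unit_galois_product_ne_one (p f m n : ℕ) (hp : p.Prime) (hm : 1 ≤ m)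
    (hn : 1 ≤ n) (hbound : m * n < (p - 1) * f)
    (F : Type) [Field F] [Fintype F] [Algebra (ZMod p) F]
    (hcard : Fintype.card F = p ^ f) :
    ∃ a : Fˣ, ∀ φ : Fin n → (F ≃ₐ[ZMod p] F), (∏ i, (φ i) ((a : F) ^ m)) ≠ 1 := by
  have := Fact.mk hp
  have hrank : Module.finrank (ZMod p) F = f := Nat.pow_right_injective hp.two_le <| by
    simp only [← hcard, Module.card_eq_pow_finrank (K := ZMod p) (V := F), ZMod.card]
  obtain ⟨g, hg⟩ := IsCyclic.exists_ofOrder_eq_natCard (α := Fˣ)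
  refine ⟨g, fun φ hprod => hbound.not_ge ?_⟩
  choose k hkf hk using fun i => FiniteField.exists_lt_finrank_algEquiv_apply_eq_pow (φ i)
  have hpow : g ^ (m * ∑ i, p ^ k i) = 1 := by
    ext
    simpa [hk, ZMod.card, ← pow_mul, Finset.prod_pow_eq_pow_sum, Finset.mul_sum] using hprod
  have hdvd : p ^ f - 1 ∣ m * ∑ i, p ^ k i := by
    rw [← hcard, ← Nat.card_eq_fintype_card, ← Nat.card_units, ← hg]
    exact orderOf_dvd_of_pow_eq_one hpow
  let s := m • Finset.univ.val.map k
  have hs_card : card s = m * n := by simp [s, card_nsmul]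
  have hs_sum : (s.map (p ^ ·)).sum = m * ∑ i, p ^ k i := by
    rw [Multiset.map_nsmul, sum_nsmul, map_map, smul_eq_mul]
    rfl
  refine hs_card ▸ Nat.sub_one_mul_le_card_of_dvd_sum_map_pow hp.two_le (fun j hj => ?_)
    (card_pos.1 (hs_card ▸ Nat.mul_pos hm hn)) (hs_sum ▸ hdvd)
  obtain ⟨i, -, rfl⟩ := mem_map.1 (mem_of_mem_nsmul hj)
  exact hrank ▸ hkf i
end

section
/- Let q = p^f be a prime power and let m, n ≥ 1 satisfy (p − 1)f > mn. Let 𝔽_q^× act on the additive group 𝔽_q by multiplication, and diagonally on the n-fold tensor power ⊗ⁿ_ℤ 𝔽_q and on the n-th exterior power Λⁿ_ℤ 𝔽_q. Then the subgroup of elements of ⊗ⁿ_ℤ 𝔽_q fixed by every element of (𝔽_q^×)^m (the subgroup of m-th powers) is zero, and likewise the subgroup of elements of Λⁿ_ℤ 𝔽_q fixed by every element of (𝔽_q^×)^m is zero. -/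
/-!
A tensor `t` fixed by all `m`-th powers satisfies `(q - 1) • t = ∑_b b^m • t`, and we show that
this sum vanishes for every `t`. As `p • t = 0` and `p` is prime to `q - 1`, this forces `t = 0`;
the same then holds in `Λⁿ_ℤ 𝔽_q`, an equivariant quotient of `⊗ⁿ_ℤ 𝔽_q`.
The vanishing is detected by the functionals `y₁ ⊗ ⋯ ⊗ yₙ ↦ ∏ⱼ yⱼ ^ p ^ kⱼ` with `0 ≤ kⱼ < f`:
products of trace forms `y ↦ Tr(a y) = ∑ᵢ (a y) ^ p ^ i` are linear combinations of them, and
these separate the points of `⊗ⁿ_ℤ 𝔽_q = ⊗ⁿ_{𝔽_p} 𝔽_q` (take `a` in the trace-dual basis). On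
`∑_b b^m • y₁ ⊗ ⋯ ⊗ yₙ` such a functional takes the value `(∑_b b ^ N) ∏ⱼ yⱼ ^ p ^ kⱼ` with
`N = m ∑ⱼ p ^ kⱼ`, and `∑_b b ^ N = 0` unless `q - 1 ∣ N`. Finally `q - 1 ∤ N`: modulo `q - 1`,
multiplication by `p` rotates the exponents `kⱼ` cyclically in `ℤ/f`, and the `f` rotations of `N`
add up to `m n (q - 1) / (p - 1) < f (q - 1)`, so one of them is a positive number below `q - 1`.
-/

noncomputable section
attribute [local instance] Classical.propDecidable

open scoped TensorProduct

noncomputable def mulLin (F : Type) [Field F] (c : F) : F →ₗ[ℤ] F := LinearMap.mulLeft ℤ c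

@[simp]
theorem mulLin_apply (F : Type) [Field F] (c x : F) : mulLin F c x = c * x := rfl

section Digits

variable {ι : Type*} [Fintype ι] {p f m : ℕ}

theorem natCast_pow_eq_pow_mod (hp : 0 < p) (x : ℕ) :
    (p : ZMod (p ^ f - 1)) ^ x = (p : ZMod (p ^ f - 1)) ^ (x % f) := by
  have hpf : (p : ZMod (p ^ f - 1)) ^ f = 1 := by
    have h : ((p ^ f - 1 + 1 : ℕ) : ZMod (p ^ f - 1)) = 1 := by
      rw [Nat.cast_add, ZMod.natCast_self, zero_add, Nat.cast_one]
    rwa [Nat.sub_add_cancel (Nat.one_le_pow _ _ hp), Nat.cast_pow] at h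
  conv_lhs => rw [← Nat.div_add_mod x f, pow_add, pow_mul, hpf, one_pow, one_mul]

theorem dvd_mul_sum_pow_rotate (hp : 0 < p) (k : ι → Fin f)
    (h : p ^ f - 1 ∣ m * ∑ j, p ^ (k j : ℕ)) (r : Fin f) :
    p ^ f - 1 ∣ m * ∑ j, p ^ ((k j + r : Fin f) : ℕ) := by
  rw [← ZMod.natCast_eq_zero_iff] at h ⊢
  push_cast at h ⊢
  simp only [Fin.val_add, ← natCast_pow_eq_pow_mod hp, pow_add, ← Finset.sum_mul, ← mul_assoc, h,
    zero_mul]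

theorem sum_rotate_sum_pow (k : ι → Fin f) :
    ∑ r : Fin f, ∑ j, p ^ ((k j + r : Fin f) : ℕ) =
      Fintype.card ι * ∑ u ∈ Finset.range f, p ^ u := by
  rcases Nat.eq_zero_or_pos f with rfl | hf
  · simp
  have : NeZero f := ⟨hf.ne'⟩
  rw [Finset.sum_comm, ← Fin.sum_univ_eq_sum_range, ← smul_eq_mul, ← Finset.card_univ,
    ← Finset.sum_const]
  exact Finset.sum_congr rfl fun j _ => Fintype.sum_equiv (Equiv.addLeft (k j)) _ _ fun r => rfl

theorem not_dvd_mul_sum_pow [Nonempty ι] (hm : 0 < m)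
    (hbound : m * Fintype.card ι < (p - 1) * f) (k : ι → Fin f) :
    ¬ p ^ f - 1 ∣ m * ∑ j, p ^ (k j : ℕ) := by
  intro h
  have hp : 0 < p - 1 := Nat.pos_of_mul_pos_right (by omega : 0 < (p - 1) * f)
  have hq : 0 < p ^ f - 1 := by
    have : p ≤ p ^ f := Nat.le_self_pow (Nat.pos_of_mul_pos_left (by omega : 0 < (p - 1) * f)).ne' p
    omega
  have hrot (r : Fin f) : p ^ f - 1 ≤ m * ∑ j, p ^ ((k j + r : Fin f) : ℕ) :=
    Nat.le_of_dvd (Nat.mul_pos hm (Finset.sum_pos (fun j _ => Nat.pow_pos (by omega))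
      Finset.univ_nonempty)) (dvd_mul_sum_pow_rotate (by omega) k h r)
  have hsum : f * (p ^ f - 1) ≤ m * Fintype.card ι * ∑ u ∈ Finset.range f, p ^ u :=
    calc f * (p ^ f - 1) = ∑ _r : Fin f, (p ^ f - 1) := by simp
      _ ≤ ∑ r : Fin f, m * ∑ j, p ^ ((k j + r : Fin f) : ℕ) := Finset.sum_le_sum fun r _ => hrot r
      _ = _ := by rw [← Finset.mul_sum, sum_rotate_sum_pow, mul_assoc]
  have := Nat.mul_le_mul_right (p - 1) hsum
  rw [mul_assoc (m * _), geom_sum_mul_of_one_le (by omega), mul_right_comm, mul_comm f] at this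
  have := Nat.le_of_mul_le_mul_right this hq
  omega

end Digits

theorem CharP.coprime_card_units (F : Type*) [Field F] [Fintype F] (p : ℕ) [Fact p.Prime]
    [CharP F p] : p.Coprime (Fintype.card Fˣ) := by
  have hdvd : p ∣ Fintype.card F := (prime_dvd_char_iff_dvd_card p).1 (ringChar.eq F p).symm.dvd
  rw [Fintype.card_units]
  exact Nat.Coprime.coprime_dvd_left hdvd <|
    (Nat.coprime_self_sub_right Fintype.card_pos).2 (Nat.coprime_one_right _)

theorem eq_zero_of_forall_eq_of_sum_eq_zero {V β : Type*} [AddCommGroup V] [Fintype β] {p : ℕ}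
    (hcop : p.Coprime (Fintype.card β)) {v : V} (hp : p • v = 0) (g : β → V) (hg : ∀ b, g b = v)
    (hsum : ∑ b, g b = 0) : v = 0 := by
  have hcard : Fintype.card β • v = 0 := by simpa [hg] using hsum
  exact AddMonoid.addOrderOf_eq_one_iff.1 <| Nat.eq_one_of_dvd_coprimes hcop
    (addOrderOf_dvd_of_nsmul_eq_zero hp) (addOrderOf_dvd_of_nsmul_eq_zero hcard)

theorem intCast_smul_eq_zero_of_charP {R : Type*} [Ring R] (p : ℕ) [CharP R p] (x : R) :
    (p : ℤ) • x = 0 := by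
  rw [zsmul_eq_mul, Int.cast_natCast, CharP.cast_eq_zero, zero_mul]

theorem PiTensorProduct.smul_eq_zero_of_forall {ι R : Type*} [CommRing R] [Nonempty ι]
    {s : ι → Type*} [∀ i, AddCommGroup (s i)] [∀ i, Module R (s i)] {r : R}
    (h : ∀ i (x : s i), r • x = 0) (t : ⨂[R] i, s i) : r • t = 0 := by
  induction t using PiTensorProduct.induction_on with
  | smul_tprod c x =>
    obtain ⟨i⟩ := ‹Nonempty ι›
    rw [smul_comm, ← Function.update_eq_self i x, ← MultilinearMap.map_update_smul, h,
      MultilinearMap.map_update_zero, smul_zero]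
  | add t t' ht ht' => rw [smul_add, ht, ht', add_zero]

section Frobenius

variable {ι : Type*} [Fintype ι] (F : Type*) [Field F] (p : ℕ)

def frobeniusMonomial [ExpChar F p] (k : ι → ℕ) : (⨂[ℤ] _ : ι, F) →ₗ[ℤ] F :=
  PiTensorProduct.lift <| (MultilinearMap.mkPiAlgebra ℤ ι F).compLinearMap
    fun j => (iterateFrobenius F p (k j)).toIntAlgHom.toLinearMap

@[simp]
theorem frobeniusMonomial_tprod [ExpChar F p] (k : ι → ℕ) (y : ι → F) :
    frobeniusMonomial F p k (PiTensorProduct.tprod ℤ y) = ∏ j, y j ^ p ^ k j := by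
  simp [frobeniusMonomial, iterateFrobenius_def]

def traceMonomial [Algebra (ZMod p) F] (a : ι → F) : (⨂[ℤ] _ : ι, F) →ₗ[ℤ] F :=
  PiTensorProduct.lift <| (MultilinearMap.mkPiAlgebra ℤ ι F).compLinearMap fun j =>
    ((Algebra.linearMap (ZMod p) F ∘ₗ Algebra.trace (ZMod p) F ∘ₗ
      LinearMap.mulLeft (ZMod p) (a j)).restrictScalars ℤ)

@[simp]
theorem traceMonomial_tprod [Algebra (ZMod p) F] (a y : ι → F) :
    traceMonomial F p a (PiTensorProduct.tprod ℤ y) =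
      ∏ j, algebraMap (ZMod p) F (Algebra.trace (ZMod p) F (a j * y j)) := by
  simp [traceMonomial]

variable {F p} [Fact p.Prime] [Finite F] [Algebra (ZMod p) F]

theorem traceMonomial_traceDual_tprod {β : Type*} [Finite β] [DecidableEq β]
    (e : Module.Basis β (ZMod p) F) (c c' : ι → β) :
    traceMonomial F p (fun j => e.traceDual (c j)) (PiTensorProduct.tprod ℤ fun j => e (c' j)) =
      if c' = c then 1 else 0 := by
  simp only [traceMonomial_tprod, Module.Basis.trace_traceDual_mul,
    MonoidWithZeroHom.map_ite_one_zero, Finset.prod_boole, Finset.mem_univ, true_imp_iff]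
  exact if_congr (funext_iff (f := c') (g := c)).symm rfl rfl

variable [CharP F p]

theorem traceMonomial_eq_sum {f : ℕ} (hf : Module.finrank (ZMod p) F = f) (a : ι → F) :
    traceMonomial F p a =
      ∑ k : ι → Fin f, (∏ j, a j ^ p ^ (k j : ℕ)) • frobeniusMonomial F p fun j => (k j : ℕ) := by
  refine PiTensorProduct.ext (MultilinearMap.ext fun y => ?_)
  simp only [LinearMap.compMultilinearMap_apply, traceMonomial_tprod,
    FiniteField.algebraMap_trace_eq_sum_pow, hf, Nat.card_zmod, ← Fin.sum_univ_eq_sum_range,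
    Finset.prod_univ_sum, LinearMap.coe_sum, Finset.sum_apply, LinearMap.smul_apply,
    frobeniusMonomial_tprod, smul_eq_mul, mul_pow, Finset.prod_mul_distrib, Fintype.piFinset_univ]

end Frobenius

theorem PiTensorProduct.span_tprod_zmod_basis_eq_top {ι β M : Type*} [Finite ι] {n : ℕ}
    [AddCommGroup M] [Module (ZMod n) M] (e : Module.Basis β (ZMod n) M) :
    Submodule.span ℤ (Set.range fun c : ι → β => PiTensorProduct.tprod ℤ fun j => e (c j)) = ⊤ :=
  PiTensorProduct.submodule_span_eq_top fun _ => by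
    rw [← Submodule.restrictScalars_span ℤ (ZMod n) ZMod.intCast_surjective, e.span_eq,
      Submodule.restrictScalars_top]

theorem eq_zero_of_forall_frobeniusMonomial_eq_zero {ι F : Type*} [Fintype ι] [Nonempty ι]
    [Field F] [Fintype F] {p f : ℕ} [Fact p.Prime] [CharP F p] (hcard : Fintype.card F = p ^ f)
    (t : ⨂[ℤ] _ : ι, F) (h : ∀ k : ι → Fin f, frobeniusMonomial F p (fun j => (k j : ℕ)) t = 0) :
    t = 0 := by
  let := ZMod.algebra F p
  have hf : Module.finrank (ZMod p) F = f :=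
    Nat.pow_right_injective (Fact.out : p.Prime).two_le <|
      show p ^ _ = p ^ f by rw [FiniteField.pow_finrank_eq_card p, hcard]
  let e := Module.finBasisOfFinrankEq (ZMod p) F hf
  obtain ⟨d, rfl⟩ := (Submodule.mem_span_range_iff_exists_fun ℤ).1 <|
    (PiTensorProduct.span_tprod_zmod_basis_eq_top (ι := ι) e).ge (Submodule.mem_top (x := t))
  have hd (c : ι → Fin f) : (d c : F) = 0 := by
    have h0 : traceMonomial F p (fun j => e.traceDual (c j))
        (∑ c', d c' • PiTensorProduct.tprod ℤ fun j => e (c' j)) = 0 := by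
      rw [traceMonomial_eq_sum hf, LinearMap.coe_sum, Finset.sum_apply]
      exact Finset.sum_eq_zero fun k _ => by rw [LinearMap.smul_apply, h, smul_zero]
    simpa only [map_sum, map_zsmul, traceMonomial_traceDual_tprod, smul_ite, smul_zero,
      Finset.sum_ite_eq', Finset.mem_univ, if_true, zsmul_one] using h0
  refine Finset.sum_eq_zero fun c _ => ?_
  obtain ⟨z, hz⟩ := (CharP.intCast_eq_zero_iff F p _).1 (hd c)
  rw [hz, mul_smul, PiTensorProduct.smul_eq_zero_of_forall
    (fun _ => intCast_smul_eq_zero_of_charP p)]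

theorem frobeniusMonomial_sum_units_pow_mul_eq_zero {ι F : Type*} [Fintype ι] [Field F] [Fintype F]
    {p m : ℕ} [ExpChar F p] (k : ι → ℕ) (hk : ¬ Fintype.card F - 1 ∣ m * ∑ j, p ^ k j)
    (y : ι → F) :
    frobeniusMonomial F p k (∑ b : Fˣ, PiTensorProduct.tprod ℤ fun j => (b : F) ^ m * y j) = 0 := by
  simp only [map_sum, frobeniusMonomial_tprod, mul_pow, ← pow_mul, Finset.prod_mul_distrib,
    Finset.prod_pow_eq_pow_sum, ← Finset.mul_sum, ← Finset.sum_mul]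
  rw [FiniteField.sum_pow_units, if_neg hk, zero_mul]

theorem sum_map_mulLin_pow_eq_zero {ι : Type*} {F : Type} [Fintype ι] [Nonempty ι] [Field F] [Fintype F]
    {p f m : ℕ} [Fact p.Prime] [CharP F p] (hcard : Fintype.card F = p ^ f) (hm : 0 < m)
    (hbound : m * Fintype.card ι < (p - 1) * f) (t : ⨂[ℤ] _ : ι, F) :
    ∑ b : Fˣ, PiTensorProduct.map (fun _ => mulLin F ((b : F) ^ m)) t = 0 := by
  suffices ∑ b : Fˣ, PiTensorProduct.map (fun _ : ι => mulLin F ((b : F) ^ m)) = 0 by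
    simpa using congr($this t)
  refine PiTensorProduct.ext (MultilinearMap.ext fun y => ?_)
  simp only [LinearMap.compMultilinearMap_apply, LinearMap.coe_sum, Finset.sum_apply,
    PiTensorProduct.map_tprod, mulLin_apply, LinearMap.zero_apply]
  refine eq_zero_of_forall_frobeniusMonomial_eq_zero hcard _ fun k => ?_
  refine frobeniusMonomial_sum_units_pow_mul_eq_zero _ ?_ y
  rw [hcard]
  exact not_dvd_mul_sum_pow hm hbound k

section ExteriorPower

variable (R M : Type*) [CommRing R] [AddCommGroup M] [Module R M] (n : ℕ)

def tensorPowerToExteriorPower : (⨂[R] _ : Fin n, M) →ₗ[R] ⋀[R]^n M :=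
  PiTensorProduct.lift (exteriorPower.ιMulti R n).toMultilinearMap

theorem tensorPowerToExteriorPower_surjective :
    Function.Surjective (tensorPowerToExteriorPower R M n) := by
  rw [← LinearMap.range_eq_top, eq_top_iff, ← exteriorPower.ιMulti_span, Submodule.span_le]
  rintro _ ⟨y, rfl⟩
  exact ⟨PiTensorProduct.tprod R y, by simp [tensorPowerToExteriorPower]⟩

variable {R M n} {N : Type*} [AddCommGroup N] [Module R N]

theorem ExteriorAlgebra.map_tensorPowerToExteriorPower (g : M →ₗ[R] N) (t : ⨂[R] _ : Fin n, M) :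
    ExteriorAlgebra.map g (tensorPowerToExteriorPower R M n t) =
      (tensorPowerToExteriorPower R N n (PiTensorProduct.map (fun _ => g) t) :
        ExteriorAlgebra R N) := by
  induction t using PiTensorProduct.induction_on with
  | smul_tprod c y =>
    simp [tensorPowerToExteriorPower, ExteriorAlgebra.map_apply_ιMulti, Function.comp_def]
  | add t t' ht ht' => simp only [map_add, Submodule.coe_add, ht, ht']

end ExteriorPower

/-- Let `q = p^f` and `m, n ≥ 1` with `(p-1)f > mn`.  For the diagonal
multiplication action of `𝔽_q^×` on the `n`-fold tensor power `⊗ⁿ_ℤ 𝔽_q` and on the `n`-th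
exterior power `Λⁿ_ℤ 𝔽_q`, the subgroups of elements fixed by every `m`-th power are zero. -/
theorem tensor_exterior_fixed_points_zero (p f m n : ℕ) (hp : p.Prime) (hm : 1 ≤ m)
    (hn : 1 ≤ n) (hbound : m * n < (p - 1) * f)
    (F : Type) [Field F] [Fintype F] (hcard : Fintype.card F = p ^ f) :
    (∀ x : ⨂[ℤ] (_ : Fin n), F,
      (∀ b : Fˣ, PiTensorProduct.map (fun _ => mulLin F ((b : F) ^ m)) x = x) → x = 0) ∧
    (∀ x : ↥(⋀[ℤ]^n F),
      (∀ b : Fˣ, ExteriorAlgebra.map (mulLin F ((b : F) ^ m)) (x : ExteriorAlgebra ℤ F) =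
        (x : ExteriorAlgebra ℤ F)) → x = 0) := by
  have : Fact p.Prime := ⟨hp⟩
  have : CharP F p := charP_of_card_eq_prime_pow hcard
  have : Nonempty (Fin n) := ⟨⟨0, hn⟩⟩
  have hsum := sum_map_mulLin_pow_eq_zero (ι := Fin n) hcard hm (by simpa using hbound)
  have htors (t : ⨂[ℤ] (_ : Fin n), F) : p • t = 0 := by
    rw [← natCast_zsmul, PiTensorProduct.smul_eq_zero_of_forall
      fun _ => intCast_smul_eq_zero_of_charP p]
  have hcop := CharP.coprime_card_units F p
  refine ⟨fun x hx => eq_zero_of_forall_eq_of_sum_eq_zero hcop (htors x) _ hx (hsum x),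
    fun x hx => ?_⟩
  obtain ⟨t, rfl⟩ := tensorPowerToExteriorPower_surjective ℤ F n x
  refine Submodule.coe_eq_zero.1 (eq_zero_of_forall_eq_of_sum_eq_zero hcop ?_ _ hx ?_)
  · rw [← Submodule.coe_smul_of_tower, ← map_nsmul, htors, map_zero, Submodule.coe_zero]
  · simp_rw [ExteriorAlgebra.map_tensorPowerToExteriorPower, ← Submodule.coe_sum, ← map_sum, hsum,
      map_zero, Submodule.coe_zero]
end
end
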